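/- Let N ≥ 1 and r : Fin N → ℝ with 0 ≤ r_i for all i, let R = max_i r_i, and define PWR : EuclideanSpace ℝ (Fin N) → ℝ by PWR(φ) = |∑_i r_i · exp(φ_i · I)|². Then the gradient of PWR is Lipschitz with constant 4·N·R²: for all x, y ∈ EuclideanSpace ℝ (Fin N), ‖fderiv ℝ PWR x − fderiv ℝ PWR y‖ ≤ 4·N·R²·‖x − y‖. (Appendix E: PWR_w has a Lipschitz gradient, as required for the gradient-descent convergence result.) -/

import Mathlib

/-!
Write `PWR = ‖z‖²` for the phasor sum `z(φ) = ∑ rᵢ e^{iφᵢ}`. For a differentiable map `f` into a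
real inner product space, `D‖f‖²(x) = 2⟪f x, Df(x) ·⟫`, and splitting
`D‖f‖²(x) - D‖f‖²(y) = 2⟪f x - f y, Df(x) ·⟫ + 2⟪f y, (Df(x) - Df(y)) ·⟫`
bounds it by `2 (B² + A L) ‖x - y‖` whenever `‖f‖ ≤ A`, `‖Df‖ ≤ B` (so `f` is `B`-Lipschitz) and
`Df` is `L`-Lipschitz. For the phasor sum one may take `A = N ‖r‖`, `B = √N ‖r‖` (Cauchy–Schwarz)
and `L = ‖r‖` (as `t ↦ e^{it}` is 1-Lipschitz), where `‖r‖ = maxᵢ |rᵢ|` is the sup norm; this gives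
`4 N ‖r‖² = 4 N R²`.
-/

open Complex Real

section NormSq

variable {E F : Type*} [NormedAddCommGroup E] [NormedSpace ℝ E]
  [NormedAddCommGroup F] [InnerProductSpace ℝ F]

theorem norm_fderiv_norm_sq_sub_le {f : E → F} {f' : E → E →L[ℝ] F} {A B L : ℝ}
    (hf : ∀ x, HasFDerivAt f (f' x) x) (hA : ∀ x, ‖f x‖ ≤ A) (hB : ∀ x, ‖f' x‖ ≤ B)
    (hL : ∀ x y, ‖f' x - f' y‖ ≤ L * ‖x - y‖) (x y : E) :
    ‖fderiv ℝ (‖f ·‖ ^ 2) x - fderiv ℝ (‖f ·‖ ^ 2) y‖ ≤ 2 * (B ^ 2 + A * L) * ‖x - y‖ := by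
  have hf_lip : ‖f x - f y‖ ≤ B * ‖x - y‖ :=
    convex_univ.norm_image_sub_le_of_norm_hasFDerivWithin_le
      (fun z _ ↦ (hf z).hasFDerivWithinAt) (fun z _ ↦ hB z) trivial trivial
  have hsplit : (innerSL ℝ (f x)).comp (f' x) - (innerSL ℝ (f y)).comp (f' y) =
      (innerSL ℝ (f x - f y)).comp (f' x) + (innerSL ℝ (f y)).comp (f' x - f' y) := by
    ext v
    simp only [sub_apply, add_apply, ContinuousLinearMap.comp_apply, innerSL_apply_apply,
      inner_sub_left, inner_sub_right]
    ring
  have hB0 : 0 ≤ B := (norm_nonneg _).trans (hB x)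
  have hA0 : 0 ≤ A := (norm_nonneg _).trans (hA x)
  rw [(hf x).norm_sq.fderiv, (hf y).norm_sq.fderiv, ← smul_sub, hsplit]
  calc ‖(2 : ℕ) • ((innerSL ℝ (f x - f y)).comp (f' x) + (innerSL ℝ (f y)).comp (f' x - f' y))‖
      ≤ 2 * (‖f x - f y‖ * ‖f' x‖ + ‖f y‖ * ‖f' x - f' y‖) := by
        refine norm_nsmul_le.trans ?_
        rw [Nat.cast_ofNat]
        gcongr
        refine norm_add_le_of_le ?_ ?_ <;>
          exact (ContinuousLinearMap.opNorm_comp_le _ _).trans_eq (by rw [innerSL_apply_norm])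
    _ ≤ 2 * (B * ‖x - y‖ * B + A * (L * ‖x - y‖)) := by
        gcongr
        exacts [hB x, hA y, hL x y]
    _ = 2 * (B ^ 2 + A * L) * ‖x - y‖ := by ring

end NormSq

theorem EuclideanSpace.norm_sum_proj_smulRight_le {ι F : Type*} [Fintype ι]
    [NormedAddCommGroup F] [NormedSpace ℝ F] (c : ι → F) :
    ‖∑ i, (EuclideanSpace.proj (𝕜 := ℝ) i).smulRight (c i)‖ ≤ √(∑ i, ‖c i‖ ^ 2) := by
  refine ContinuousLinearMap.opNorm_le_bound _ (by positivity) fun v ↦ ?_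
  simp only [sum_apply, ContinuousLinearMap.smulRight_apply, PiLp.proj_apply]
  calc ‖∑ i, v i • c i‖ ≤ ∑ i, ‖c i‖ * ‖v i‖ :=
        (norm_sum_le _ _).trans_eq (by simp only [norm_smul, mul_comm])
    _ ≤ √(∑ i, ‖c i‖ ^ 2) * √(∑ i, ‖v i‖ ^ 2) := Real.sum_mul_le_sqrt_mul_sqrt _ _ _
    _ = √(∑ i, ‖c i‖ ^ 2) * ‖v‖ := by rw [EuclideanSpace.norm_eq]

theorem Complex.norm_exp_ofReal_mul_I_sub_exp_ofReal_mul_I_le (a b : ℝ) :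
    ‖exp (a * I) - exp (b * I)‖ ≤ |a - b| := by
  have h : exp (a * I) - exp (b * I) = exp (b * I) * (exp (I * ↑(a - b)) - 1) := by
    rw [mul_sub, ← Complex.exp_add, mul_one]
    push_cast
    ring_nf
  rw [h, norm_mul, norm_exp_ofReal_mul_I, one_mul, ← Real.norm_eq_abs]
  exact Real.norm_exp_I_mul_ofReal_sub_one_le

section Phasor

variable {ι : Type*} [Fintype ι] (r : ι → ℝ)

noncomputable def phasorSum (φ : EuclideanSpace ℝ ι) : ℂ :=
  ∑ i, (r i : ℂ) * exp ((φ i : ℂ) * I)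

noncomputable def phasorSumDeriv (φ : EuclideanSpace ℝ ι) : EuclideanSpace ℝ ι →L[ℝ] ℂ :=
  ∑ i, (EuclideanSpace.proj (𝕜 := ℝ) i).smulRight ((r i : ℂ) * (exp ((φ i : ℂ) * I) * I))

theorem hasFDerivAt_phasorSum (φ : EuclideanSpace ℝ ι) :
    HasFDerivAt (phasorSum r) (phasorSumDeriv r φ) φ := by
  refine HasFDerivAt.fun_sum fun i _ ↦ ?_
  have h := (((hasDerivAt_id (φ i : ℂ)).mul_const I).cexp.const_mul (r i : ℂ)).comp_ofReal
  refine (h.hasFDerivAt.comp φ (EuclideanSpace.proj (𝕜 := ℝ) i).hasFDerivAt).congr_fderiv ?_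
  ext v
  simp

theorem norm_phasorSum_le (φ : EuclideanSpace ℝ ι) :
    ‖phasorSum r φ‖ ≤ Fintype.card ι * ‖r‖ := by
  calc ‖phasorSum r φ‖ ≤ ∑ i, ‖(r i : ℂ) * exp ((φ i : ℂ) * I)‖ := norm_sum_le _ _
    _ ≤ ∑ _i : ι, ‖r‖ := by
        gcongr with i
        rw [norm_mul, norm_exp_ofReal_mul_I, mul_one, norm_real]
        exact norm_le_pi_norm r i
    _ = Fintype.card ι * ‖r‖ := by simp

theorem norm_phasorSumDeriv_le (φ : EuclideanSpace ℝ ι) :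
    ‖phasorSumDeriv r φ‖ ≤ √(Fintype.card ι) * ‖r‖ := by
  calc ‖phasorSumDeriv r φ‖ ≤ √(∑ i, ‖(r i : ℂ) * (exp ((φ i : ℂ) * I) * I)‖ ^ 2) :=
        EuclideanSpace.norm_sum_proj_smulRight_le _
    _ ≤ √(∑ _i : ι, ‖r‖ ^ 2) := by
        gcongr with i
        rw [norm_mul, norm_mul, norm_exp_ofReal_mul_I, norm_I, mul_one, mul_one, norm_real]
        exact norm_le_pi_norm r i
    _ = √(Fintype.card ι) * ‖r‖ := by simp [sqrt_mul, sqrt_sq]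

theorem norm_phasorSumDeriv_sub_le (x y : EuclideanSpace ℝ ι) :
    ‖phasorSumDeriv r x - phasorSumDeriv r y‖ ≤ ‖r‖ * ‖x - y‖ := by
  have hsub : phasorSumDeriv r x - phasorSumDeriv r y =
      ∑ i, (EuclideanSpace.proj (𝕜 := ℝ) i).smulRight
        ((r i : ℂ) * ((exp ((x i : ℂ) * I) - exp ((y i : ℂ) * I)) * I)) := by
    ext v
    simp [phasorSumDeriv, ← Finset.sum_sub_distrib, mul_sub, sub_mul]
  calc ‖phasorSumDeriv r x - phasorSumDeriv r y‖
      ≤ √(∑ i, ‖(r i : ℂ) * ((exp ((x i : ℂ) * I) - exp ((y i : ℂ) * I)) * I)‖ ^ 2) :=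
        hsub ▸ EuclideanSpace.norm_sum_proj_smulRight_le _
    _ ≤ √(∑ i, (‖r‖ * ‖x i - y i‖) ^ 2) := by
        gcongr with i
        rw [norm_mul, norm_mul, norm_I, mul_one, norm_real, Real.norm_eq_abs (x i - y i)]
        gcongr
        · exact norm_le_pi_norm r i
        · exact norm_exp_ofReal_mul_I_sub_exp_ofReal_mul_I_le _ _
    _ = ‖r‖ * ‖x - y‖ := by
        simp_rw [mul_pow, ← Finset.mul_sum, sqrt_mul (sq_nonneg _), sqrt_sq (norm_nonneg _),
          EuclideanSpace.norm_eq, PiLp.sub_apply]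

end Phasor

theorem PWR_lipschitz_gradient_general (N : ℕ) (r : Fin N → ℝ) (hr : ∀ i, 0 ≤ r i)
    (R : ℝ) (hR : IsGreatest (Set.range r) R)
    (PWR : EuclideanSpace ℝ (Fin N) → ℝ)
    (hPWR : ∀ φ : EuclideanSpace ℝ (Fin N),
      PWR φ = ‖∑ i, (r i : ℂ) * Complex.exp ((φ i : ℂ) * Complex.I)‖ ^ 2) :
    ∀ x y : EuclideanSpace ℝ (Fin N),
      ‖fderiv ℝ PWR x - fderiv ℝ PWR y‖ ≤ 4 * N * R ^ 2 * ‖x - y‖ := by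
  intro x y
  have hR0 : 0 ≤ R := by
    obtain ⟨i, rfl⟩ := hR.1
    exact hr i
  have hr_norm : ‖r‖ ≤ R := (pi_norm_le_iff_of_nonneg hR0).2 fun i ↦
    (norm_of_nonneg (hr i)).trans_le (hR.2 ⟨i, rfl⟩)
  obtain rfl : PWR = (‖phasorSum r ·‖ ^ 2) := funext hPWR
  calc ‖fderiv ℝ (‖phasorSum r ·‖ ^ 2) x - fderiv ℝ (‖phasorSum r ·‖ ^ 2) y‖
      ≤ 2 * ((√N * ‖r‖) ^ 2 + N * ‖r‖ * ‖r‖) * ‖x - y‖ := by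
        simpa using norm_fderiv_norm_sq_sub_le (hasFDerivAt_phasorSum r) (norm_phasorSum_le r)
          (norm_phasorSumDeriv_le r) (norm_phasorSumDeriv_sub_le r) x y
    _ = 4 * N * ‖r‖ ^ 2 * ‖x - y‖ := by rw [mul_pow, sq_sqrt N.cast_nonneg]; ring
    _ ≤ 4 * N * R ^ 2 * ‖x - y‖ := by gcongr

/-- Appendix E: `PWR_w` has a Lipschitz gradient with constant `4·N·R²`, where `R = max_i r_i`. -/
theorem PWR_lipschitz_gradient (N : ℕ) (hN : 1 ≤ N) (r : Fin N → ℝ) (hr : ∀ i, 0 ≤ r i)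
    (R : ℝ) (hR : IsGreatest (Set.range r) R)
    (PWR : EuclideanSpace ℝ (Fin N) → ℝ)
    (hPWR : ∀ φ : EuclideanSpace ℝ (Fin N),
      PWR φ = ‖∑ i, (r i : ℂ) * Complex.exp ((φ i : ℂ) * Complex.I)‖ ^ 2) :
    ∀ x y : EuclideanSpace ℝ (Fin N),
      ‖fderiv ℝ PWR x - fderiv ℝ PWR y‖ ≤ 4 * N * R ^ 2 * ‖x - y‖ :=
  PWR_lipschitz_gradient_general N r hr R hR PWR hPWR
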